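/- Let n ≥ 1, let B be a nondegenerate symmetric ℚ-bilinear form on ℚⁿ, let ℓ ≥ 1 be an integer, and write e(x) := exp(2πi·x) for x ∈ ℚ. Let Λ_R ⊆ Λ₁ and Λ_R ⊆ Λ₂ be lattices in ℚⁿ such that Λ' := Λ_R ∩ ℓ·Λ₁^B = Λ_R ∩ ℓ·Λ₂^B, let g: Λ₁ × Λ₂ → ℂˣ be biadditive and invariant under translation by Λ_R in each argument, and let A: Λ₂ → Λ₂ be a centralizer transfer map, i.e., A(Λ₂) = Λ₂ ∩ ℓ·Λ_R^B and A(Λ_R) = Λ_R ∩ ℓ·Λ₂^B. Then (λ + Λ', μ + Λ') ↦ e(−B(λ,μ)/ℓ)·g(λ,μ) is a well-defined pairing f̂: (Λ₁/Λ') × (Λ₂/Λ') → ℂˣ, and f̂ is perfect if and only if the induced pairing a_g^ℓ: (Λ₁/Λ_R) × (Λ₂/Λ_R) → ℂˣ, (λ̄,μ̄) ↦ e(−B(λ,A(μ))/ℓ)·g(λ,A(μ)), is perfect. -/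

import Mathlib

/-!
Translating `λ` by `α ∈ Λ_R ∩ ℓ·Λ₂^B` (or `μ` by `α ∈ Λ_R ∩ ℓ·Λ₁^B`) changes neither `g` nor
`e(−B(λ,μ)/ℓ)`, which gives well-definedness. For perfectness the key input is duality of finite
abelian groups: `(α, μ) ↦ e(−B(α,μ)/ℓ)` pairs `Λ_R` and `Λ₂` perfectly modulo `ℓ·Λ₂^B` and
`ℓ·Λ_R^B`, and `Λ₂ / (Λ₂ ∩ ℓ·Λ_R^B)` is finite, so every character of `Λ₂` trivial on
`A(Λ₂) = Λ₂ ∩ ℓ·Λ_R^B` is `e(−B(α,·)/ℓ)` for some `α ∈ Λ_R`. Applied to `f̂(λ, ·)` for `λ` in the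
left radical of `a_g^ℓ`, this puts `λ − α` in the left radical of `f̂`. The right radicals
correspond through `A`, which is injective: it is `ℚ`-linear and its image contains a lattice.
-/

/-- A lattice in `ℚⁿ`: a subgroup generated by a `ℚ`-basis. -/
def IsLattice {n : ℕ} (L : AddSubgroup (Fin n → ℚ)) : Prop :=
  ∃ b : Module.Basis (Fin n) ℚ (Fin n → ℚ), L = AddSubgroup.closure (Set.range b)

/-- The dual lattice `L^B` of `L` with respect to a bilinear form `B`. -/
def dualLattice {n : ℕ} (B : (Fin n → ℚ) →ₗ[ℚ] (Fin n → ℚ) →ₗ[ℚ] ℚ)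
    (L : AddSubgroup (Fin n → ℚ)) : AddSubgroup (Fin n → ℚ) where
  carrier := {x | ∀ y ∈ L, ∃ k : ℤ, B x y = (k : ℚ)}
  zero_mem' := fun y _ => ⟨0, by simp⟩
  add_mem' := by
    intro a b ha hb y hy
    obtain ⟨k, hk⟩ := ha y hy
    obtain ⟨m, hm⟩ := hb y hy
    exact ⟨k + m, by simp [map_add, hk, hm]⟩
  neg_mem' := by
    intro a ha y hy
    obtain ⟨k, hk⟩ := ha y hy
    exact ⟨-k, by simp [hk]⟩

/-- The lattice `ℓ·L`. -/
def smulLat {n : ℕ} (ℓ : ℕ) (L : AddSubgroup (Fin n → ℚ)) : AddSubgroup (Fin n → ℚ) :=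
  L.map (DistribMulAction.toAddMonoidHom (Fin n → ℚ) ((ℓ : ℚ)))

/-- `e(x) = exp(2πi·x)`. -/
noncomputable def ee (x : ℚ) : ℂ := Complex.exp (2 * Real.pi * Complex.I * (x : ℂ))

noncomputable def eeUnit (x : ℚ) : ℂˣ := Units.mk0 (ee x) (Complex.exp_ne_zero _)

@[simp] lemma coe_eeUnit (x : ℚ) : (eeUnit x : ℂ) = ee x := rfl

lemma ee_add (x y : ℚ) : ee (x + y) = ee x * ee y := by
  simp [ee, ← Complex.exp_add, mul_add]

lemma eeUnit_add (x y : ℚ) : eeUnit (x + y) = eeUnit x * eeUnit y := Units.ext (ee_add x y)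

@[simp] lemma ee_zero : ee 0 = 1 := by simp [ee]

lemma ee_eq_one_iff {x : ℚ} : ee x = 1 ↔ ∃ k : ℤ, x = k := by
  have h2πi : 2 * (Real.pi : ℂ) * Complex.I ≠ 0 := by simp [Real.pi_ne_zero]
  simp only [ee, Complex.exp_eq_one_iff]
  refine exists_congr fun k => ?_
  rw [mul_comm _ (x : ℂ), mul_left_inj' h2πi]
  exact_mod_cast Iff.rfl

lemma ee_neg_eq_one_iff {x : ℚ} : ee (-x) = 1 ↔ ee x = 1 := by
  simp only [ee_eq_one_iff, neg_eq_iff_eq_neg]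
  exact ⟨fun ⟨k, hk⟩ => ⟨-k, by simp [hk]⟩, fun ⟨k, hk⟩ => ⟨-k, by simp [hk]⟩⟩

theorem MonoidHom.exists_eq_of_separating {H M : Type*} [Group H] [CommGroup M]
    {K : Subgroup M} [Finite (M ⧸ K)] (φ : H →* M →* ℂˣ) (hφK : ∀ h, ∀ k ∈ K, φ h k = 1)
    (hsep : ∀ m, (∀ h, φ h m = 1) → m ∈ K) (χ : M →* ℂˣ) (hχ : ∀ k ∈ K, χ k = 1) :
    ∃ h, φ h = χ := by
  have : NeZero (Monoid.exponent (M ⧸ K →* ℂˣ) : ℂ) :=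
    ⟨Nat.cast_ne_zero.mpr (by exact Monoid.exponent_ne_zero_of_finite (G := M ⧸ K →* ℂˣ))⟩
  let π : (M ⧸ K →* ℂˣ) →* M →* ℂˣ := MonoidHom.compHom' (QuotientGroup.mk' K)
  have hlift : ∀ ψ : M →* ℂˣ, ∀ hψ : ∀ k ∈ K, ψ k = 1, π (QuotientGroup.lift K ψ hψ) = ψ :=
    fun ψ hψ => by ext; rfl
  suffices QuotientGroup.lift K χ hχ ∈ (φ.range.comap π) by
    obtain ⟨h, hh⟩ := this
    exact ⟨h, hh.trans (hlift χ hχ)⟩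
  rw [← CommGroup.forall_monoidHom_apply_eq_one_iff ℂ]
  intro Ψ hΨ
  -- by double duality `Ψ` is evaluation at some `mk m`, and `Ψ` kills the image of `φ`
  obtain ⟨m, hm⟩ := QuotientGroup.mk_surjective (CommGroup.monoidHomMonoidHomEquiv (M ⧸ K) ℂ Ψ)
  have hmK : m ∈ K := hsep m fun h => by
    have := hΨ (QuotientGroup.lift K (φ h) (hφK h)) ⟨h, (hlift _ _).symm⟩
    rwa [← CommGroup.apply_monoidHomMonoidHomEquiv, ← hm] at this
  rw [← CommGroup.apply_monoidHomMonoidHomEquiv, ← hm, (QuotientGroup.eq_one_iff m).mpr hmK,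
    map_one]

lemma finite_quotient_of_forall_zpow_mem {M : Type*} [CommGroup M] [Group.FG M] (K : Subgroup M)
    (h : ∀ m : M, ∃ N : ℤ, N ≠ 0 ∧ m ^ N ∈ K) : Finite (M ⧸ K) := by
  refine CommGroup.finite_of_fg_isMulTorsion _ fun q => QuotientGroup.induction_on q fun m => ?_
  obtain ⟨N, hN, hm⟩ := h m
  exact isOfFinOrder_iff_zpow_eq_one.mpr
    ⟨N, hN, by rw [← QuotientGroup.mk_zpow, QuotientGroup.eq_one_iff]; exact hm⟩

section Lattice

variable {n : ℕ} (B : (Fin n → ℚ) →ₗ[ℚ] (Fin n → ℚ) →ₗ[ℚ] ℚ)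

lemma mem_dualLattice_iff_ee {L : AddSubgroup (Fin n → ℚ)} {x : Fin n → ℚ} :
    x ∈ dualLattice B L ↔ ∀ y ∈ L, ee (B x y) = 1 := by
  simp only [ee_eq_one_iff]; rfl

lemma mem_smulLat_iff {ℓ : ℕ} (hℓ : ℓ ≠ 0) {L : AddSubgroup (Fin n → ℚ)} {x : Fin n → ℚ} :
    x ∈ smulLat ℓ L ↔ (ℓ : ℚ)⁻¹ • x ∈ L := by
  have hℓ' : (ℓ : ℚ) ≠ 0 := Nat.cast_ne_zero.mpr hℓ
  refine ⟨?_, fun hx => ⟨_, hx, smul_inv_smul₀ hℓ' x⟩⟩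
  rintro ⟨y, hy, rfl⟩
  simpa [inv_smul_smul₀ hℓ'] using hy

lemma mem_smulLat_dualLattice_iff {ℓ : ℕ} (hℓ : ℓ ≠ 0) {L : AddSubgroup (Fin n → ℚ)}
    {x : Fin n → ℚ} :
    x ∈ smulLat ℓ (dualLattice B L) ↔ ∀ y ∈ L, ee (-(B x y) / ℓ) = 1 := by
  simp only [mem_smulLat_iff hℓ, mem_dualLattice_iff_ee, neg_div, ee_neg_eq_one_iff, map_smul,
    LinearMap.smul_apply, smul_eq_mul, inv_mul_eq_div]

lemma mem_dualLattice_closure_iff {S : Set (Fin n → ℚ)} {x : Fin n → ℚ} :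
    x ∈ dualLattice B (AddSubgroup.closure S) ↔ ∀ s ∈ S, ∃ k : ℤ, B x s = k := by
  refine ⟨fun hx s hs => hx s (AddSubgroup.subset_closure hs), fun hx => ?_⟩
  have hle : AddSubgroup.closure S ≤ (Int.castAddHom ℚ).range.comap (B x).toAddMonoidHom :=
    (AddSubgroup.closure_le _).mpr fun s hs => by
      obtain ⟨k, hk⟩ := hx s hs
      exact ⟨k, hk.symm⟩
  intro y hy
  obtain ⟨k, hk⟩ := hle hy
  exact ⟨k, hk.symm⟩

lemma IsLattice.fg {L : AddSubgroup (Fin n → ℚ)} (hL : IsLattice L) : AddGroup.FG L := by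
  obtain ⟨b, rfl⟩ := hL
  exact (AddGroup.fg_iff_addSubgroup_fg _).mpr
    ((AddSubgroup.fg_iff _).mpr ⟨Set.range b, rfl, Set.finite_range b⟩)

lemma IsLattice.span_eq_top {L : AddSubgroup (Fin n → ℚ)} (hL : IsLattice L) :
    Submodule.span ℚ (L : Set (Fin n → ℚ)) = ⊤ := by
  obtain ⟨b, rfl⟩ := hL
  exact top_le_iff.mp (b.span_eq ▸ Submodule.span_mono AddSubgroup.subset_closure)

lemma IsLattice.exists_zsmul_mem_dualLattice {L : AddSubgroup (Fin n → ℚ)} (hL : IsLattice L)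
    (v : Fin n → ℚ) : ∃ N : ℤ, N ≠ 0 ∧ N • v ∈ dualLattice B L := by
  obtain ⟨b, rfl⟩ := hL
  obtain ⟨N, hN⟩ := IsLocalization.exist_integer_multiples (nonZeroDivisors ℤ) Finset.univ
    fun i => B v (b i)
  refine ⟨N, nonZeroDivisors.coe_ne_zero N, (mem_dualLattice_closure_iff B).mpr ?_⟩
  rintro _ ⟨i, rfl⟩
  obtain ⟨k, hk⟩ := hN i (Finset.mem_univ i)
  exact ⟨k, by rw [map_zsmul, LinearMap.smul_apply, ← hk, algebraMap_int_eq, eq_intCast]⟩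

lemma IsLattice.exists_zsmul_mem_smulLat_dualLattice {ℓ : ℕ} (hℓ : ℓ ≠ 0)
    {L : AddSubgroup (Fin n → ℚ)} (hL : IsLattice L) (v : Fin n → ℚ) :
    ∃ N : ℤ, N ≠ 0 ∧ N • v ∈ smulLat ℓ (dualLattice B L) := by
  obtain ⟨N, hN, hNv⟩ := hL.exists_zsmul_mem_dualLattice B v
  refine ⟨ℓ * N, mul_ne_zero (Int.natCast_ne_zero.mpr hℓ) hN, (mem_smulLat_iff hℓ).mpr ?_⟩
  rwa [mul_zsmul, ← Int.cast_smul_eq_zsmul ℚ, Int.cast_natCast,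
    inv_smul_smul₀ (Nat.cast_ne_zero.mpr hℓ)]

open Multiplicative

noncomputable def eePairing (ℓ : ℕ) (L M : AddSubgroup (Fin n → ℚ)) :
    Multiplicative L →* Multiplicative M →* ℂˣ :=
  MonoidHom.mk'
    (fun α => MonoidHom.mk' (fun μ => eeUnit (-(B α.toAdd μ.toAdd) / ℓ)) fun μ ν => by
      simp only [toAdd_mul, AddSubgroup.coe_add, map_add, neg_add, add_div, eeUnit_add])
    fun α β => by
      refine MonoidHom.ext fun μ => ?_
      simp only [MonoidHom.mk'_apply, MonoidHom.mul_apply, toAdd_mul, AddSubgroup.coe_add, map_add,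
        LinearMap.add_apply, neg_add, add_div, eeUnit_add]

lemma eePairing_eq_one_iff {ℓ : ℕ} {L M : AddSubgroup (Fin n → ℚ)} (α : L) (μ : M) :
    eePairing B ℓ L M (ofAdd α) (ofAdd μ) = 1 ↔ ee (-(B α μ) / ℓ) = 1 :=
  Units.ext_iff

theorem exists_mem_eq_eeUnit_of_smulLat_dualLattice (hBsymm : ∀ x y, B x y = B y x) {ℓ : ℕ}
    (hℓ : ℓ ≠ 0) {L M : AddSubgroup (Fin n → ℚ)} (hL : IsLattice L) (hM : IsLattice M)
    (χ : Multiplicative M →* ℂˣ)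
    (hχ : ∀ μ : M, (μ : Fin n → ℚ) ∈ smulLat ℓ (dualLattice B L) → χ (ofAdd μ) = 1) :
    ∃ α ∈ L, ∀ μ : M, χ (ofAdd μ) = eeUnit (-(B α μ) / ℓ) := by
  have := hM.fg
  let K : Subgroup (Multiplicative M) :=
    ((smulLat ℓ (dualLattice B L)).addSubgroupOf M).toSubgroup
  have : Finite (Multiplicative M ⧸ K) := finite_quotient_of_forall_zpow_mem K fun μ =>
    hL.exists_zsmul_mem_smulLat_dualLattice B hℓ (μ.toAdd : Fin n → ℚ)
  obtain ⟨α, hα⟩ := (eePairing B ℓ L M).exists_eq_of_separating (K := K)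
    (fun α μ hμ => (eePairing_eq_one_iff B α.toAdd μ.toAdd).mpr <| by
      rw [hBsymm]; exact (mem_smulLat_dualLattice_iff B hℓ).mp hμ _ α.toAdd.2)
    (fun μ hμ => (mem_smulLat_dualLattice_iff B hℓ).mpr fun y hy => by
      rw [hBsymm]; exact (eePairing_eq_one_iff B ⟨y, hy⟩ μ.toAdd).mp (hμ (ofAdd ⟨y, hy⟩)))
    χ fun μ hμ => hχ μ.toAdd hμ
  exact ⟨α.toAdd, α.toAdd.2, fun μ => by rw [← hα]; rfl⟩

theorem AddMonoidHom.injective_of_forall_zsmul_mem_range {L : AddSubgroup (Fin n → ℚ)}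
    (hL : IsLattice L) (A : (Fin n → ℚ) →+ (Fin n → ℚ))
    (hA : ∀ x ∈ L, ∃ N : ℤ, N ≠ 0 ∧ N • x ∈ A.range) : Function.Injective A := by
  let Aℚ := A.toRatLinearMap
  suffices Function.Surjective Aℚ from LinearMap.injective_iff_surjective.mpr this
  rw [← LinearMap.range_eq_top, eq_top_iff, ← hL.span_eq_top, Submodule.span_le]
  intro x hx
  obtain ⟨N, hN, w, hw⟩ := hA x hx
  refine ⟨(N : ℚ)⁻¹ • w, ?_⟩
  rw [map_smul, show Aℚ w = N • x from hw, ← Int.cast_smul_eq_zsmul ℚ,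
    inv_smul_smul₀ (Int.cast_ne_zero.mpr hN)]

lemma injective_of_map_eq_inf_smulLat_dualLattice {ℓ : ℕ} (hℓ : ℓ ≠ 0)
    {ΛR Λ₂ : AddSubgroup (Fin n → ℚ)} (hR : IsLattice ΛR) (h₂ : IsLattice Λ₂)
    {A : (Fin n → ℚ) →+ (Fin n → ℚ)} (hA : Λ₂.map A = Λ₂ ⊓ smulLat ℓ (dualLattice B ΛR)) :
    Function.Injective A :=
  A.injective_of_forall_zsmul_mem_range h₂ fun x hx => by
    obtain ⟨N, hN, hNx⟩ := hR.exists_zsmul_mem_smulLat_dualLattice B hℓ x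
    refine ⟨N, hN, AddSubgroup.map_le_range A Λ₂ ?_⟩
    rw [hA]
    exact ⟨Λ₂.zsmul_mem hx N, hNx⟩

end Lattice

section Pairing

variable {n : ℕ} {B : (Fin n → ℚ) →ₗ[ℚ] (Fin n → ℚ) →ₗ[ℚ] ℚ} {ℓ : ℕ}
  {g : (Fin n → ℚ) → (Fin n → ℚ) → ℂˣ} {ΛR Λ₁ Λ₂ : AddSubgroup (Fin n → ℚ)}

open Multiplicative

/-- The paper's `f̂(λ, μ)`; its `a_g^ℓ(λ, μ)` is `f̂(λ, A μ)`. -/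
noncomputable def twistedPairing (B : (Fin n → ℚ) →ₗ[ℚ] (Fin n → ℚ) →ₗ[ℚ] ℚ) (ℓ : ℕ)
    (g : (Fin n → ℚ) → (Fin n → ℚ) → ℂˣ) (x y : Fin n → ℚ) : ℂ :=
  ee (-(B x y) / ℓ) * g x y

lemma eq_one_of_mem_of_add_left_invariant
    (hg1 : ∀ lam lam' μ, lam ∈ Λ₁ → lam' ∈ Λ₁ → μ ∈ Λ₂ → g (lam + lam') μ = g lam μ * g lam' μ)
    (hginv1 : ∀ lam μ α, lam ∈ Λ₁ → μ ∈ Λ₂ → α ∈ ΛR → g (lam + α) μ = g lam μ)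
    {α μ : Fin n → ℚ} (hα : α ∈ ΛR) (hμ : μ ∈ Λ₂) : g α μ = 1 := by
  have h0 := hg1 0 0 μ Λ₁.zero_mem Λ₁.zero_mem hμ
  rw [add_zero, left_eq_mul] at h0
  rw [← zero_add α, hginv1 0 μ α Λ₁.zero_mem hμ hα, h0]

lemma twistedPairing_add_left (hℓ : ℓ ≠ 0)
    (hginv1 : ∀ lam μ α, lam ∈ Λ₁ → μ ∈ Λ₂ → α ∈ ΛR → g (lam + α) μ = g lam μ)
    {lam μ α : Fin n → ℚ} (hlam : lam ∈ Λ₁) (hμ : μ ∈ Λ₂)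
    (hα : α ∈ ΛR ⊓ smulLat ℓ (dualLattice B Λ₂)) :
    twistedPairing B ℓ g (lam + α) μ = twistedPairing B ℓ g lam μ := by
  rw [twistedPairing, twistedPairing, hginv1 lam μ α hlam hμ hα.1, map_add, LinearMap.add_apply,
    neg_add, add_div, ee_add, (mem_smulLat_dualLattice_iff B hℓ).mp hα.2 μ hμ, mul_one]

lemma twistedPairing_add_right (hℓ : ℓ ≠ 0) (hBsymm : ∀ x y, B x y = B y x)
    (hginv2 : ∀ lam μ α, lam ∈ Λ₁ → μ ∈ Λ₂ → α ∈ ΛR → g lam (μ + α) = g lam μ)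
    {lam μ α : Fin n → ℚ} (hlam : lam ∈ Λ₁) (hμ : μ ∈ Λ₂)
    (hα : α ∈ ΛR ⊓ smulLat ℓ (dualLattice B Λ₁)) :
    twistedPairing B ℓ g lam (μ + α) = twistedPairing B ℓ g lam μ := by
  rw [twistedPairing, twistedPairing, hginv2 lam μ α hlam hμ hα.1, map_add, hBsymm lam α,
    neg_add, add_div, ee_add, (mem_smulLat_dualLattice_iff B hℓ).mp hα.2 lam hlam, mul_one]

lemma twistedPairing_of_mem_left
    (hg1 : ∀ lam lam' μ, lam ∈ Λ₁ → lam' ∈ Λ₁ → μ ∈ Λ₂ → g (lam + lam') μ = g lam μ * g lam' μ)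
    (hginv1 : ∀ lam μ α, lam ∈ Λ₁ → μ ∈ Λ₂ → α ∈ ΛR → g (lam + α) μ = g lam μ)
    {α μ : Fin n → ℚ} (hα : α ∈ ΛR) (hμ : μ ∈ Λ₂) :
    twistedPairing B ℓ g α μ = ee (-(B α μ) / ℓ) := by
  rw [twistedPairing, eq_one_of_mem_of_add_left_invariant hg1 hginv1 hα hμ, Units.val_one, mul_one]

lemma exists_forall_twistedPairing_sub_eq_one (hℓ : ℓ ≠ 0) (hBsymm : ∀ x y, B x y = B y x)
    (hR : IsLattice ΛR) (h₂ : IsLattice Λ₂) (hsub₁ : ΛR ≤ Λ₁)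
    (hg2 : ∀ lam μ μ', lam ∈ Λ₁ → μ ∈ Λ₂ → μ' ∈ Λ₂ → g lam (μ + μ') = g lam μ * g lam μ')
    (hginv1 : ∀ lam μ α, lam ∈ Λ₁ → μ ∈ Λ₂ → α ∈ ΛR → g (lam + α) μ = g lam μ)
    {A : (Fin n → ℚ) →+ (Fin n → ℚ)} (hA1 : Λ₂.map A = Λ₂ ⊓ smulLat ℓ (dualLattice B ΛR))
    {lam : Fin n → ℚ} (hlam : lam ∈ Λ₁) (hker : ∀ μ ∈ Λ₂, twistedPairing B ℓ g lam (A μ) = 1) :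
    ∃ α ∈ ΛR, ∀ μ ∈ Λ₂, twistedPairing B ℓ g (lam - α) μ = 1 := by
  let χ : Multiplicative Λ₂ →* ℂˣ :=
    MonoidHom.mk' (fun μ => eeUnit (-(B lam μ.toAdd) / ℓ) * g lam μ.toAdd) fun μ ν => by
      simp only [toAdd_mul, AddSubgroup.coe_add, map_add, neg_add, add_div, eeUnit_add,
        hg2 lam _ _ hlam μ.toAdd.2 ν.toAdd.2]
      exact mul_mul_mul_comm _ _ _ _
  have hχ : ∀ μ : Λ₂, (μ : Fin n → ℚ) ∈ smulLat ℓ (dualLattice B ΛR) → χ (ofAdd μ) = 1 := by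
    intro μ hμ
    obtain ⟨ν, hν, hνμ⟩ : (μ : Fin n → ℚ) ∈ Λ₂.map A := hA1 ▸ ⟨μ.2, hμ⟩
    refine Units.val_eq_one.mp ?_
    change twistedPairing B ℓ g lam μ = 1
    rw [← hνμ]
    exact hker ν hν
  obtain ⟨α, hαR, hα⟩ := exists_mem_eq_eeUnit_of_smulLat_dualLattice B hBsymm hℓ hR h₂ χ hχ
  refine ⟨α, hαR, fun μ hμ => ?_⟩
  have hχμ : ee (-(B lam μ) / ℓ) * g lam μ = ee (-(B α μ) / ℓ) := congrArg Units.val (hα ⟨μ, hμ⟩)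
  have hg : g (lam - α) μ = g lam μ := by
    rw [← hginv1 (lam - α) μ α (Λ₁.sub_mem hlam (hsub₁ hαR)) hμ hαR, sub_add_cancel]
  have hB : -(B (lam - α) μ) / ℓ = -(B lam μ) / ℓ + B α μ / ℓ := by
    rw [map_sub, LinearMap.sub_apply]; ring
  rw [twistedPairing, hg, hB, ee_add, mul_right_comm, hχμ, ← ee_add, neg_div, neg_add_cancel,
    ee_zero]

theorem forall_twistedPairing_left_iff (hℓ : ℓ ≠ 0) (hBsymm : ∀ x y, B x y = B y x)
    (hR : IsLattice ΛR) (h₂ : IsLattice Λ₂) (hsub₁ : ΛR ≤ Λ₁)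
    (hΛ' : ΛR ⊓ smulLat ℓ (dualLattice B Λ₁) = ΛR ⊓ smulLat ℓ (dualLattice B Λ₂))
    (hg1 : ∀ lam lam' μ, lam ∈ Λ₁ → lam' ∈ Λ₁ → μ ∈ Λ₂ → g (lam + lam') μ = g lam μ * g lam' μ)
    (hg2 : ∀ lam μ μ', lam ∈ Λ₁ → μ ∈ Λ₂ → μ' ∈ Λ₂ → g lam (μ + μ') = g lam μ * g lam μ')
    (hginv1 : ∀ lam μ α, lam ∈ Λ₁ → μ ∈ Λ₂ → α ∈ ΛR → g (lam + α) μ = g lam μ)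
    {A : (Fin n → ℚ) →+ (Fin n → ℚ)} (hA1 : Λ₂.map A = Λ₂ ⊓ smulLat ℓ (dualLattice B ΛR)) :
    (∀ lam ∈ Λ₁, (∀ μ ∈ Λ₂, twistedPairing B ℓ g lam μ = 1) →
        lam ∈ ΛR ⊓ smulLat ℓ (dualLattice B Λ₁)) ↔
      ∀ lam ∈ Λ₁, (∀ μ ∈ Λ₂, twistedPairing B ℓ g lam (A μ) = 1) → lam ∈ ΛR := by
  constructor
  · intro hf lam hlam hker
    obtain ⟨α, hαR, hα⟩ :=
      exists_forall_twistedPairing_sub_eq_one hℓ hBsymm hR h₂ hsub₁ hg2 hginv1 hA1 hlam hker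
    simpa using ΛR.add_mem (hf _ (Λ₁.sub_mem hlam (hsub₁ hαR)) hα).1 hαR
  · intro ha lam hlam hker
    have hlamR : lam ∈ ΛR := ha lam hlam fun μ hμ => hker _ (hA1.le ⟨μ, hμ, rfl⟩).1
    rw [hΛ']
    refine ⟨hlamR, (mem_smulLat_dualLattice_iff B hℓ).mpr fun μ hμ => ?_⟩
    rw [← twistedPairing_of_mem_left hg1 hginv1 hlamR hμ]
    exact hker μ hμ

theorem forall_twistedPairing_right_iff (hℓ : ℓ ≠ 0) (hBsymm : ∀ x y, B x y = B y x)
    (hR : IsLattice ΛR) (h₂ : IsLattice Λ₂) (hsub₁ : ΛR ≤ Λ₁)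
    (hΛ' : ΛR ⊓ smulLat ℓ (dualLattice B Λ₁) = ΛR ⊓ smulLat ℓ (dualLattice B Λ₂))
    (hg1 : ∀ lam lam' μ, lam ∈ Λ₁ → lam' ∈ Λ₁ → μ ∈ Λ₂ → g (lam + lam') μ = g lam μ * g lam' μ)
    (hginv1 : ∀ lam μ α, lam ∈ Λ₁ → μ ∈ Λ₂ → α ∈ ΛR → g (lam + α) μ = g lam μ)
    {A : (Fin n → ℚ) →+ (Fin n → ℚ)} (hA1 : Λ₂.map A = Λ₂ ⊓ smulLat ℓ (dualLattice B ΛR))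
    (hA2 : ΛR.map A = ΛR ⊓ smulLat ℓ (dualLattice B Λ₂)) :
    (∀ μ ∈ Λ₂, (∀ lam ∈ Λ₁, twistedPairing B ℓ g lam μ = 1) →
        μ ∈ ΛR ⊓ smulLat ℓ (dualLattice B Λ₁)) ↔
      ∀ μ ∈ Λ₂, (∀ lam ∈ Λ₁, twistedPairing B ℓ g lam (A μ) = 1) → μ ∈ ΛR := by
  rw [hΛ', ← hA2]
  constructor
  · intro hf μ hμ hker
    obtain ⟨ν, hν, hAν⟩ := hf (A μ) (hA1.le ⟨μ, hμ, rfl⟩).1 hker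
    rwa [← injective_of_map_eq_inf_smulLat_dualLattice B hℓ hR h₂ hA1 hAν]
  · intro ha μ hμ hker
    have hμA : μ ∈ Λ₂.map A := by
      rw [hA1]
      refine ⟨hμ, (mem_smulLat_dualLattice_iff B hℓ).mpr fun α hα => ?_⟩
      rw [hBsymm, ← twistedPairing_of_mem_left hg1 hginv1 hα hμ]
      exact hker α (hsub₁ hα)
    obtain ⟨ν, hν, rfl⟩ := hμA
    exact ⟨ν, ha ν hν hker, rfl⟩

end Pairing

/-- Well-definedness and perfectness are stated element-wise: a radical being trivial in the
quotient means it is contained in `Λ'`, resp. `Λ_R`. -/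
theorem stmt6_general {n : ℕ}
    (B : (Fin n → ℚ) →ₗ[ℚ] (Fin n → ℚ) →ₗ[ℚ] ℚ)
    (hBsymm : ∀ x y, B x y = B y x)
    (ℓ : ℕ) (hℓ : 1 ≤ ℓ)
    (ΛR Λ₁ Λ₂ : AddSubgroup (Fin n → ℚ))
    (hΛR : IsLattice ΛR) (hΛ₂ : IsLattice Λ₂)
    (hsub₁ : ΛR ≤ Λ₁)
    (hΛ' : ΛR ⊓ smulLat ℓ (dualLattice B Λ₁) = ΛR ⊓ smulLat ℓ (dualLattice B Λ₂))
    (g : (Fin n → ℚ) → (Fin n → ℚ) → ℂˣ)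
    (hg1 : ∀ lam lam' μ, lam ∈ Λ₁ → lam' ∈ Λ₁ → μ ∈ Λ₂ →
      g (lam + lam') μ = g lam μ * g lam' μ)
    (hg2 : ∀ lam μ μ', lam ∈ Λ₁ → μ ∈ Λ₂ → μ' ∈ Λ₂ →
      g lam (μ + μ') = g lam μ * g lam μ')
    (hginv1 : ∀ lam μ α, lam ∈ Λ₁ → μ ∈ Λ₂ → α ∈ ΛR → g (lam + α) μ = g lam μ)
    (hginv2 : ∀ lam μ α, lam ∈ Λ₁ → μ ∈ Λ₂ → α ∈ ΛR → g lam (μ + α) = g lam μ)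
    (A : (Fin n → ℚ) →+ (Fin n → ℚ))
    (hA1 : Λ₂.map A = Λ₂ ⊓ smulLat ℓ (dualLattice B ΛR))
    (hA2 : ΛR.map A = ΛR ⊓ smulLat ℓ (dualLattice B Λ₂)) :
    -- (a) well-definedness of `f̂` on `(Λ₁/Λ') × (Λ₂/Λ')`:
    (∀ lam μ α, lam ∈ Λ₁ → μ ∈ Λ₂ → α ∈ ΛR ⊓ smulLat ℓ (dualLattice B Λ₁) →
      (ee (-(B (lam + α) μ) / ℓ) * (g (lam + α) μ : ℂ)
          = ee (-(B lam μ) / ℓ) * (g lam μ : ℂ)) ∧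
      (ee (-(B lam (μ + α)) / ℓ) * (g lam (μ + α) : ℂ)
          = ee (-(B lam μ) / ℓ) * (g lam μ : ℂ))) ∧
    -- (b) `f̂` perfect iff `a_g^ℓ` perfect:
    (((∀ lam ∈ Λ₁, (∀ μ ∈ Λ₂, ee (-(B lam μ) / ℓ) * (g lam μ : ℂ) = 1) →
          lam ∈ ΛR ⊓ smulLat ℓ (dualLattice B Λ₁)) ∧
      (∀ μ ∈ Λ₂, (∀ lam ∈ Λ₁, ee (-(B lam μ) / ℓ) * (g lam μ : ℂ) = 1) →
          μ ∈ ΛR ⊓ smulLat ℓ (dualLattice B Λ₁))) ↔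
     ((∀ lam ∈ Λ₁, (∀ μ ∈ Λ₂, ee (-(B lam (A μ)) / ℓ) * (g lam (A μ) : ℂ) = 1) →
          lam ∈ ΛR) ∧
      (∀ μ ∈ Λ₂, (∀ lam ∈ Λ₁, ee (-(B lam (A μ)) / ℓ) * (g lam (A μ) : ℂ) = 1) →
          μ ∈ ΛR))) := by
  have hℓ₀ : ℓ ≠ 0 := Nat.one_le_iff_ne_zero.mp hℓ
  refine ⟨fun lam μ α hlam hμ hα => ⟨?_, ?_⟩, and_congr ?_ ?_⟩
  · exact twistedPairing_add_left hℓ₀ hginv1 hlam hμ (hΛ' ▸ hα)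
  · exact twistedPairing_add_right hℓ₀ hBsymm hginv2 hlam hμ hα
  · exact forall_twistedPairing_left_iff hℓ₀ hBsymm hΛR hΛ₂ hsub₁ hΛ' hg1 hg2 hginv1 hA1
  · exact forall_twistedPairing_right_iff hℓ₀ hBsymm hΛR hΛ₂ hsub₁ hΛ' hg1 hginv1 hA1 hA2

/-- `f̂(λ+Λ',μ+Λ') = e(−B(λ,μ)/ℓ)·g(λ,μ)` is a well-defined pairing
on `(Λ₁/Λ') × (Λ₂/Λ')`, and `f̂` is perfect iff the induced pairing `a_g^ℓ` on
`(Λ₁/Λ_R) × (Λ₂/Λ_R)` is perfect. Well-definedness and perfectness are stated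
element-wise (a radical being trivial in the quotient means it is contained in
`Λ'`, resp. `Λ_R`). -/
theorem stmt6 {n : ℕ} (hn : 1 ≤ n)
    (B : (Fin n → ℚ) →ₗ[ℚ] (Fin n → ℚ) →ₗ[ℚ] ℚ)
    (hBsymm : ∀ x y, B x y = B y x)
    (hBnd : ∀ x, (∀ y, B x y = 0) → x = 0)
    (ℓ : ℕ) (hℓ : 1 ≤ ℓ)
    (ΛR Λ₁ Λ₂ : AddSubgroup (Fin n → ℚ))
    (hΛR : IsLattice ΛR) (hΛ₁ : IsLattice Λ₁) (hΛ₂ : IsLattice Λ₂)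
    (hsub₁ : ΛR ≤ Λ₁) (hsub₂ : ΛR ≤ Λ₂)
    (hΛ' : ΛR ⊓ smulLat ℓ (dualLattice B Λ₁) = ΛR ⊓ smulLat ℓ (dualLattice B Λ₂))
    (g : (Fin n → ℚ) → (Fin n → ℚ) → ℂˣ)
    (hg1 : ∀ lam lam' μ, lam ∈ Λ₁ → lam' ∈ Λ₁ → μ ∈ Λ₂ →
      g (lam + lam') μ = g lam μ * g lam' μ)
    (hg2 : ∀ lam μ μ', lam ∈ Λ₁ → μ ∈ Λ₂ → μ' ∈ Λ₂ →
      g lam (μ + μ') = g lam μ * g lam μ')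
    (hginv1 : ∀ lam μ α, lam ∈ Λ₁ → μ ∈ Λ₂ → α ∈ ΛR → g (lam + α) μ = g lam μ)
    (hginv2 : ∀ lam μ α, lam ∈ Λ₁ → μ ∈ Λ₂ → α ∈ ΛR → g lam (μ + α) = g lam μ)
    (A : (Fin n → ℚ) →+ (Fin n → ℚ))
    (hA1 : Λ₂.map A = Λ₂ ⊓ smulLat ℓ (dualLattice B ΛR))
    (hA2 : ΛR.map A = ΛR ⊓ smulLat ℓ (dualLattice B Λ₂)) :
    -- (a) well-definedness of `f̂` on `(Λ₁/Λ') × (Λ₂/Λ')`: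
    (∀ lam μ α, lam ∈ Λ₁ → μ ∈ Λ₂ → α ∈ ΛR ⊓ smulLat ℓ (dualLattice B Λ₁) →
      (ee (-(B (lam + α) μ) / ℓ) * (g (lam + α) μ : ℂ)
          = ee (-(B lam μ) / ℓ) * (g lam μ : ℂ)) ∧
      (ee (-(B lam (μ + α)) / ℓ) * (g lam (μ + α) : ℂ)
          = ee (-(B lam μ) / ℓ) * (g lam μ : ℂ))) ∧
    -- (b) `f̂` perfect iff `a_g^ℓ` perfect:
    (((∀ lam ∈ Λ₁, (∀ μ ∈ Λ₂, ee (-(B lam μ) / ℓ) * (g lam μ : ℂ) = 1) →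
          lam ∈ ΛR ⊓ smulLat ℓ (dualLattice B Λ₁)) ∧
      (∀ μ ∈ Λ₂, (∀ lam ∈ Λ₁, ee (-(B lam μ) / ℓ) * (g lam μ : ℂ) = 1) →
          μ ∈ ΛR ⊓ smulLat ℓ (dualLattice B Λ₁))) ↔
     ((∀ lam ∈ Λ₁, (∀ μ ∈ Λ₂, ee (-(B lam (A μ)) / ℓ) * (g lam (A μ) : ℂ) = 1) →
          lam ∈ ΛR) ∧
      (∀ μ ∈ Λ₂, (∀ lam ∈ Λ₁, ee (-(B lam (A μ)) / ℓ) * (g lam (A μ) : ℂ) = 1) →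
          μ ∈ ΛR))) :=
  stmt6_general B hBsymm ℓ hℓ ΛR Λ₁ Λ₂ hΛR hΛ₂ hsub₁ hΛ' g hg1 hg2 hginv1 hginv2 A hA1 hA2
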